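/- arXiv:2011.01824 — 5 statements merged into one kernel-verified Lean document; each statement's English description precedes it below -/
import Mathlib

section
/- Refinement of Dedekind's theorem: let T be a finite abelian group, K a field of characteristic zero, and S ⊆ T a subset with |T \ S| / |T| < 2^{-k+1} (i.e. 2^{k-1} · |T \ S| < |T|). Then any k distinct characters θ₁,…,θ_k : T → Kˣ are linearly independent when viewed as functions S → K. -/
/-!
Artin's elimination argument, run on a shrinking domain. If `∑ cᵢ θᵢ` vanishes on `S`, then
evaluating the relation at `t * s` and subtracting `θₖ(t)` times the relation at `s` gives a
relation among `θ₁, …, θₖ₋₁` with coefficients `cᵢ (θᵢ(t) - θₖ(t))`, valid on `S ∩ t⁻¹ • S`.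
That set misses at most twice as many points as `S`, which the factor `2 ^ (k - 1)` absorbs, so
induction on `k` kills `c₁, …, cₖ₋₁` (choose `t` with `θᵢ(t) ≠ θₖ(t)`); then `cₖ = 0` because `S`
is nonempty.
-/

open Finset

open scoped Pointwise

section

variable {T K : Type*} [Group T] [CommRing K]

theorem Finset.card_compl_inter_smul_le [Fintype T] [DecidableEq T] (S : Finset T) (a : T) :
    #(S ∩ a • S)ᶜ ≤ 2 * #Sᶜ :=
  calc #(S ∩ a • S)ᶜ ≤ #Sᶜ + #(a • S)ᶜ := by rw [compl_inter]; exact card_union_le _ _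
    _ = 2 * #Sᶜ := by rw [card_compl, card_compl, card_smul_finset, two_mul]

theorem sum_mul_sub_mul_eq_zero_of_mem_inter_inv_smul {ι : Type*} [Fintype ι] [DecidableEq T]
    {S : Finset T} {θ : ι → T →* Kˣ} {c : ι → K}
    (h : ∀ s ∈ S, ∑ i, c i * θ i s = 0) (t : T) (x : K) :
    ∀ s ∈ S ∩ t⁻¹ • S, ∑ i, c i * (θ i t - x) * θ i s = 0 := by
  intro s hs
  rw [mem_inter, mem_inv_smul_finset_iff, smul_eq_mul] at hs
  calc ∑ i, c i * (θ i t - x) * θ i s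
      = ∑ i, c i * θ i (t * s) - x * ∑ i, c i * θ i s := by
        simp only [map_mul, Units.val_mul, mul_sum, ← sum_sub_distrib]
        exact sum_congr rfl fun i _ => by ring
    _ = 0 := by rw [h _ hs.2, h _ hs.1, mul_zero, sub_zero]

theorem coeff_eq_zero_of_sum_mul_eq_zero_on [IsDomain K] [Fintype T] [DecidableEq T] (k : ℕ)
    {S : Finset T} (hS : 2 ^ (k - 1) * #Sᶜ < Fintype.card T)
    {θ : Fin k → T →* Kˣ} (hθ : Function.Injective θ)
    {c : Fin k → K} (h : ∀ s ∈ S, ∑ i, c i * θ i s = 0) : c = 0 := by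
  induction k generalizing S with
  | zero => exact Subsingleton.elim _ _
  | succ k ih =>
    have hSk : 2 ^ k * #Sᶜ < Fintype.card T := by simpa using hS
    have hinit : ∀ i : Fin k, c i.castSucc = 0 := by
      intro i
      obtain ⟨t, ht⟩ : ∃ t, θ i.castSucc t ≠ θ (Fin.last k) t := by
        by_contra! heq
        exact (Fin.castSucc_lt_last i).ne (hθ (MonoidHom.ext heq))
      have hS' : 2 ^ (k - 1) * #(S ∩ t⁻¹ • S)ᶜ < Fintype.card T :=
        calc 2 ^ (k - 1) * #(S ∩ t⁻¹ • S)ᶜ ≤ 2 ^ (k - 1) * (2 * #Sᶜ) := by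
              gcongr; exact S.card_compl_inter_smul_le _
          _ = 2 ^ k * #Sᶜ := by rw [← mul_assoc, ← pow_succ, Nat.sub_add_cancel i.pos]
          _ < Fintype.card T := hSk
      have hshift := sum_mul_sub_mul_eq_zero_of_mem_inter_inv_smul h t (θ (Fin.last k) t)
      simp only [Fin.sum_univ_castSucc, sub_self, mul_zero, zero_mul, add_zero] at hshift
      have := congrFun (ih hS' (hθ.comp (Fin.castSucc_injective k)) hshift) i
      exact (mul_eq_zero.mp this).resolve_right (sub_ne_zero.mpr (Units.val_injective.ne ht))
    obtain ⟨s, hs⟩ : S.Nonempty := by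
      rw [nonempty_iff_ne_empty]
      rintro rfl
      rw [compl_empty, card_univ] at hSk
      exact hSk.not_ge (Nat.le_mul_of_pos_left _ (Nat.two_pow_pos k))
    have hlast : c (Fin.last k) * θ (Fin.last k) s = 0 := by
      simpa [Fin.sum_univ_castSucc, hinit] using h s hs
    funext i
    induction i using Fin.lastCases with
    | cast i => exact hinit i
    | last => exact (mul_eq_zero.mp hlast).resolve_right (Units.ne_zero _)

end

theorem refined_dedekind_linearIndependent_on_subset_general
    {T K : Type*} [CommGroup T] [Fintype T] [DecidableEq T]
    [Field K]
    (k : ℕ) (S : Finset T)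
    (hS : 2 ^ (k - 1) * (Sᶜ).card < Fintype.card T)
    (θ : Fin k → (T →* Kˣ)) (hθ : Function.Injective θ)
    (c : Fin k → K)
    (hvanish : ∀ s ∈ S, ∑ i, c i * ((θ i s : Kˣ) : K) = 0) :
    ∀ i, c i = 0 :=
  congrFun (coeff_eq_zero_of_sum_mul_eq_zero_on k hS hθ hvanish)

/-- Refinement of Dedekind's theorem: if `S ⊆ T` satisfies
`2^(k-1) * |T \ S| < |T|`, then any `k` distinct characters of `T` are
linearly independent as functions on `S`. -/
theorem refined_dedekind_linearIndependent_on_subset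
    {T K : Type*} [CommGroup T] [Fintype T] [DecidableEq T]
    [Field K] [CharZero K]
    (k : ℕ) (S : Finset T)
    (hS : 2 ^ (k - 1) * (Sᶜ).card < Fintype.card T)
    (θ : Fin k → (T →* Kˣ)) (hθ : Function.Injective θ)
    (c : Fin k → K)
    (hvanish : ∀ s ∈ S, ∑ i, c i * ((θ i s : Kˣ) : K) = 0) :
    ∀ i, c i = 0 :=
  refined_dedekind_linearIndependent_on_subset_general k S hS θ hθ c hvanish
end

section
/- Let T be a finite abelian group, K a field of characteristic zero, and S ⊆ T with 2^{m+m'-1}·|T \ S| < |T|. Suppose θ₁,…,θ_m and θ'₁,…,θ'_{m'} are characters T → Kˣ such that the combined list of m+m' characters consists of pairwise distinct characters, and c₁,…,c_m, c'₁,…,c'_{m'} are nonzero elements of K with c₁θ₁(s)+⋯+c_mθ_m(s) = c'₁θ'₁(s)+⋯+c'_{m'}θ'_{m'}(s) for all s ∈ S. Then m = 0 and m' = 0. -/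
/-!
Quantitative Dedekind independence. Suppose `∑ aᵢ χᵢ` vanishes on `S` and `χ₀` is one of the
characters. For any `t`, the combination `x ↦ ∑ aᵢ χᵢ(x t) - χ₀(t) ∑ aᵢ χᵢ(x)`, which has
coefficients `aᵢ (χᵢ(t) - χ₀(t))` and no `χ₀` term, vanishes on `S ∩ S t⁻¹`, whose complement is
at most twice as large as that of `S`. By induction on the number of characters all
`aᵢ (χᵢ(t) - χ₀(t))` vanish, so `aᵢ = 0` for `χᵢ ≠ χ₀`, and then `a₀ = 0` because `S` is nonempty.
Each step at most doubles `|T \ S|`, so `2^(n-1) |T \ S| < |T|` (written `2^n |T \ S| < 2 |T|`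
to avoid truncated subtraction) keeps the set nonempty down to the last character.
-/

open Finset

section CharacterIndependence

variable {T K ι : Type*} [Group T] [CommRing K]

lemma sum_mul_sub_mul_monoidHom_apply (s : Finset ι) (f : ι → T →* Kˣ) (a : ι → K)
    (χ : T →* Kˣ) (x t : T) :
    ∑ i ∈ s, a i * ((f i t : K) - χ t) * f i x =
      ∑ i ∈ s, a i * f i (x * t) - χ t * ∑ i ∈ s, a i * f i x := by
  rw [mul_sum, ← sum_sub_distrib]
  refine sum_congr rfl fun i _ => ?_
  rw [map_mul, Units.val_mul]
  ring

variable [Fintype T] [DecidableEq T]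

lemma card_compl_filter_mul_mem_le (S : Finset T) (t : T) :
    #{x ∈ S | x * t ∈ S}ᶜ ≤ 2 * #Sᶜ := by
  have hsub : {x ∈ S | x * t ∈ S}ᶜ ⊆ Sᶜ ∪ Sᶜ.image (· * t⁻¹) := by
    intro x hx
    by_cases hxt : x * t ∈ S
    · simp_all
    · exact mem_union_right _ (mem_image.mpr ⟨x * t, mem_compl.mpr hxt, mul_inv_cancel_right x t⟩)
  calc #{x ∈ S | x * t ∈ S}ᶜ ≤ #(Sᶜ ∪ Sᶜ.image (· * t⁻¹)) := card_le_card hsub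
    _ ≤ #Sᶜ + #(Sᶜ.image (· * t⁻¹)) := card_union_le _ _
    _ ≤ 2 * #Sᶜ := by linarith [card_image_le (s := Sᶜ) (f := (· * t⁻¹))]

variable [NoZeroDivisors K]

theorem eq_zero_of_sum_mul_monoidHom_eq_zero_on {f : ι → T →* Kˣ} (hf : Function.Injective f)
    (s : Finset ι) {S : Finset T} (hS : 2 ^ #s * #Sᶜ < 2 * Fintype.card T) {a : ι → K}
    (hsum : ∀ x ∈ S, ∑ i ∈ s, a i * f i x = 0) : ∀ i ∈ s, a i = 0 := by
  induction s using Finset.cons_induction generalizing S a with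
  | empty => simp
  | cons i₀ s hi₀ ih =>
    rw [card_cons, pow_succ', mul_assoc] at hS
    replace hS := Nat.lt_of_mul_lt_mul_left hS
    have hshift (t : T) : ∀ i ∈ s, a i * ((f i t : K) - f i₀ t) = 0 := by
      refine ih (S := {x ∈ S | x * t ∈ S}) ?_ fun x hx => ?_
      · calc 2 ^ #s * #{x ∈ S | x * t ∈ S}ᶜ ≤ 2 ^ #s * (2 * #Sᶜ) :=
              Nat.mul_le_mul_left _ (card_compl_filter_mul_mem_le S t)
          _ < 2 * Fintype.card T := by rw [mul_left_comm]; omega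
      · obtain ⟨hxS, hxtS⟩ := mem_filter.mp hx
        have := sum_mul_sub_mul_monoidHom_apply (cons i₀ s hi₀) f a (f i₀) x t
        rwa [hsum _ hxtS, hsum _ hxS, mul_zero, sub_zero, sum_cons, sub_self, mul_zero,
          zero_mul, zero_add] at this
    have htail : ∀ i ∈ s, a i = 0 := by
      intro i hi
      obtain ⟨t, ht⟩ := DFunLike.ne_iff.mp (hf.ne (ne_of_mem_of_not_mem hi hi₀))
      exact (mul_eq_zero.mp (hshift t i hi)).resolve_right
        (sub_ne_zero.mpr (Units.val_injective.ne ht))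
    obtain ⟨x, hx⟩ : S.Nonempty := by
      rw [← card_pos]
      have := card_compl S
      have := Nat.le_mul_of_pos_left #Sᶜ (Nat.two_pow_pos #s)
      omega
    have hhead : a i₀ * f i₀ x = 0 := by
      have hrest : ∑ i ∈ s, a i * f i x = 0 := sum_eq_zero fun i hi => by rw [htail i hi, zero_mul]
      simpa only [sum_cons, hrest, add_zero] using hsum x hx
    rw [forall_mem_cons]
    exact ⟨(Units.mul_left_eq_zero _).mp hhead, htail⟩

end CharacterIndependence

theorem distinct_character_combinations_agree_on_subset_empty_general
    {T K : Type*} [CommGroup T] [Fintype T] [DecidableEq T]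
    [Field K]
    (m m' : ℕ) (S : Finset T)
    (hS : 2 ^ (m + m' - 1) * (Sᶜ).card < Fintype.card T)
    (θ : Fin m → (T →* Kˣ)) (θ' : Fin m' → (T →* Kˣ))
    (hdist : Function.Injective (Sum.elim θ θ' : Fin m ⊕ Fin m' → (T →* Kˣ)))
    (c : Fin m → K) (c' : Fin m' → K)
    (hc : ∀ i, c i ≠ 0) (hc' : ∀ j, c' j ≠ 0)
    (heq : ∀ s ∈ S,
      ∑ i, c i * ((θ i s : Kˣ) : K) = ∑ j, c' j * ((θ' j s : Kˣ) : K)) :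
    m = 0 ∧ m' = 0 := by
  have hbound : 2 ^ #(univ : Finset (Fin m ⊕ Fin m')) * #Sᶜ < 2 * Fintype.card T := by
    rw [card_univ, Fintype.card_sum, Fintype.card_fin, Fintype.card_fin]
    calc 2 ^ (m + m') * #Sᶜ ≤ 2 * 2 ^ (m + m' - 1) * #Sᶜ := by
          gcongr
          rw [← pow_succ']
          exact Nat.pow_le_pow_right two_pos (by omega)
      _ < 2 * Fintype.card T := by rw [mul_assoc]; omega
  have hvanish := eq_zero_of_sum_mul_monoidHom_eq_zero_on hdist univ hbound
    (a := Sum.elim c (-c')) fun x hx => by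
      simp [Fintype.sum_sum_type, heq x hx]
  constructor
  · by_contra hm
    exact hc ⟨0, by omega⟩ (hvanish (.inl _) (mem_univ _))
  · by_contra hm'
    exact hc' ⟨0, by omega⟩ (by simpa using hvanish (.inr ⟨0, by omega⟩) (mem_univ _))

/-- If `2^(m+m'-1) * |T \ S| < |T|` and two linear combinations of
pairwise distinct characters with nonzero coefficients agree on `S`,
then both combinations are empty. -/
theorem distinct_character_combinations_agree_on_subset_empty
    {T K : Type*} [CommGroup T] [Fintype T] [DecidableEq T]
    [Field K] [CharZero K]
    (m m' : ℕ) (S : Finset T)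
    (hS : 2 ^ (m + m' - 1) * (Sᶜ).card < Fintype.card T)
    (θ : Fin m → (T →* Kˣ)) (θ' : Fin m' → (T →* Kˣ))
    (hdist : Function.Injective (Sum.elim θ θ' : Fin m ⊕ Fin m' → (T →* Kˣ)))
    (c : Fin m → K) (c' : Fin m' → K)
    (hc : ∀ i, c i ≠ 0) (hc' : ∀ j, c' j ≠ 0)
    (heq : ∀ s ∈ S,
      ∑ i, c i * ((θ i s : Kˣ) : K) = ∑ j, c' j * ((θ' j s : Kˣ) : K)) :
    m = 0 ∧ m' = 0 :=
  distinct_character_combinations_agree_on_subset_empty_general m m' S hS θ θ' hdist c c' hc hc' heq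
end

section
/- Let T be a finite abelian group, K a field of characteristic zero, and S ⊆ T a subset with 2·|T \ S| < |T|. If a character θ : T → Kˣ is constant on S, then θ is the trivial character. -/
open Finset Pointwise

/-! A set `S` covering more than half of a finite group meets each of its translates `g • S`,
so every `g` is a quotient `a * b⁻¹` of two elements of `S`. A homomorphism constant on `S`
therefore sends every `g` to `θ a * θ b⁻¹ = θ b * θ b⁻¹ = 1`. -/

theorem Finset.exists_mul_inv_eq_of_card_lt {G : Type*} [Group G] [Fintype G] [DecidableEq G]
    {S : Finset G} (hS : Fintype.card G < 2 * #S) (g : G) :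
    ∃ a ∈ S, ∃ b ∈ S, a * b⁻¹ = g := by
  obtain ⟨a, ha⟩ : (g • S ∩ S).Nonempty :=
    inter_nonempty_of_card_lt_card_add_card (subset_univ _) (subset_univ _)
      (by rw [card_univ, card_smul_finset]; omega)
  obtain ⟨haS', haS⟩ := mem_inter.mp ha
  obtain ⟨b, hbS, rfl⟩ := mem_smul_finset.mp haS'
  exact ⟨g • b, haS, b, hbS, by simp⟩

theorem MonoidHom.eq_one_of_eq_on_of_card_lt {G M : Type*} [Group G] [Fintype G]
    [DecidableEq G] [Monoid M] {S : Finset G} (hS : Fintype.card G < 2 * #S) (θ : G →* M)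
    (hconst : ∀ a ∈ S, ∀ b ∈ S, θ a = θ b) : θ = 1 := by
  ext g
  obtain ⟨a, ha, b, hb, rfl⟩ := exists_mul_inv_eq_of_card_lt hS g
  rw [map_mul, hconst a ha b hb, ← map_mul, mul_inv_cancel, map_one, one_apply]

theorem character_constant_on_large_subset_trivial_general
    {T K : Type*} [CommGroup T] [Fintype T] [DecidableEq T]
    [Field K]
    (S : Finset T) (hS : 2 * (Sᶜ).card < Fintype.card T)
    (θ : T →* Kˣ)
    (hconst : ∀ s ∈ S, ∀ s' ∈ S, θ s = θ s') :
    θ = 1 := by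
  have hS_large : Fintype.card T < 2 * #S := by
    have := card_add_card_compl S
    omega
  exact θ.eq_one_of_eq_on_of_card_lt hS_large hconst

/-- If `2 * |T \ S| < |T|` and a character of `T` is constant on `S`,
then it is the trivial character. -/
theorem character_constant_on_large_subset_trivial
    {T K : Type*} [CommGroup T] [Fintype T] [DecidableEq T]
    [Field K] [CharZero K]
    (S : Finset T) (hS : 2 * (Sᶜ).card < Fintype.card T)
    (θ : T →* Kˣ)
    (hconst : ∀ s ∈ S, ∀ s' ∈ S, θ s = θ s') :
    θ = 1 :=
  character_constant_on_large_subset_trivial_general S hS θ hconst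
end

section
/- Let T be a finite abelian group, K a field of characteristic zero, and θ₁,…,θ_k pairwise distinct characters T → Kˣ. If c₁,…,c_k ∈ K are not all zero and c₁θ₁(s)+⋯+c_kθ_k(s) = 0 for all s in a subset S ⊆ T, then |S| ≤ (1 − 2^{-k+1})·|T|. -/
open Finset

/-- Quantitative zero-set bound: if a nontrivial linear combination of `k`
distinct characters vanishes on `S ⊆ T`, then `|S| ≤ (1 - 2^{1-k}) * |T|`,
i.e. `2^(k-1) * |S| ≤ (2^(k-1) - 1) * |T|`. -/
theorem zero_set_of_character_combination_bound
    {T K : Type*} [CommGroup T] [Fintype T] [DecidableEq T]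
    [Field K] [CharZero K]
    (k : ℕ) (S : Finset T)
    (θ : Fin k → (T →* Kˣ)) (hθ : Function.Injective θ)
    (c : Fin k → K) (hc : ∃ i, c i ≠ 0)
    (hvanish : ∀ s ∈ S, ∑ i, c i * ((θ i s : Kˣ) : K) = 0) :
    2 ^ (k - 1) * S.card ≤ (2 ^ (k - 1) - 1) * Fintype.card T := by
  induction k generalizing S with
  | zero => obtain ⟨i, _⟩ := hc; exact i.elim0
  | succ k ih =>
    obtain ⟨j, hj⟩ := hc
    rcases Nat.eq_zero_or_pos k with hk | hk
    · subst hk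
      have hS : S = ∅ := by
        rw [Finset.eq_empty_iff_forall_notMem]
        intro s hs
        have h := hvanish s hs
        rw [Fin.sum_univ_one] at h
        have h0 : c 0 = 0 := by
          have : ((θ 0 s : Kˣ) : K) ≠ 0 := Units.ne_zero _
          exact (mul_eq_zero.mp h).resolve_right this
        exact hj ((Fin.fin_one_eq_zero j) ▸ h0)
      simp [hS]
    · -- pick m ≠ j
      set m : Fin (k + 1) := if j = 0 then ⟨1, by omega⟩ else 0 with hmdef
      have hjm : j ≠ m := by
        rcases eq_or_ne j 0 with h | h
        · rw [hmdef, if_pos h, h]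
          intro hh
          exact absurd (congrArg Fin.val hh) (by simp)
        · rw [hmdef, if_neg h]
          exact h
      have hθne : θ j ≠ θ m := fun h => hjm (hθ h)
      have hu : ∃ u : T, θ j u ≠ θ m u := by
        by_contra h
        push_neg at h
        exact hθne (MonoidHom.ext h)
      obtain ⟨u, huu⟩ := hu
      have hval : ((θ j u : Kˣ) : K) ≠ ((θ m u : Kˣ) : K) :=
        fun h => huu (Units.ext h)
      set S' : Finset T := S ∩ S.image (· * u⁻¹) with hS'def
      have hmemS' : ∀ t ∈ S', t ∈ S ∧ t * u ∈ S := by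
        intro t ht
        rw [hS'def, Finset.mem_inter, Finset.mem_image] at ht
        obtain ⟨h1, s, hs, hseq⟩ := ht
        refine ⟨h1, ?_⟩
        have : t * u = s := by rw [← hseq, inv_mul_cancel_right]
        rwa [this]
      -- new characters and coefficients
      set σ : Fin k → Fin (k + 1) := m.succAbove with hσ
      set θ' : Fin k → (T →* Kˣ) := fun i => θ (σ i) with hθ'def
      set c' : Fin k → K := fun i => c (σ i) * (((θ (σ i) u : Kˣ) : K) - ((θ m u : Kˣ) : K)) with hc'def
      have hθ' : Function.Injective θ' :=
        hθ.comp (Fin.succAbove_right_injective)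
      obtain ⟨j', hj'⟩ := Fin.exists_succAbove_eq hjm
      have hc' : ∃ i, c' i ≠ 0 := by
        refine ⟨j', ?_⟩
        rw [hc'def]
        simp only [hσ, hj']
        exact mul_ne_zero hj (sub_ne_zero.mpr hval)
      have hvanish' : ∀ t ∈ S', ∑ i, c' i * ((θ' i t : Kˣ) : K) = 0 := by
        intro t ht
        obtain ⟨ht1, ht2⟩ := hmemS' t ht
        have h1 := hvanish (t * u) ht2
        have h2 := hvanish t ht1
        have key : ∀ i : Fin (k + 1),
            c i * (((θ i u : Kˣ) : K) - ((θ m u : Kˣ) : K)) * ((θ i t : Kˣ) : K)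
            = c i * ((θ i (t * u) : Kˣ) : K) - ((θ m u : Kˣ) : K) * (c i * ((θ i t : Kˣ) : K)) := by
          intro i
          rw [map_mul, Units.val_mul]
          ring
        have hfull : ∑ i : Fin (k + 1),
            c i * (((θ i u : Kˣ) : K) - ((θ m u : Kˣ) : K)) * ((θ i t : Kˣ) : K) = 0 := by
          simp only [key]
          rw [Finset.sum_sub_distrib, ← Finset.mul_sum, h1, h2]
          ring
        rw [Fin.sum_univ_succAbove
          (fun i => c i * (((θ i u : Kˣ) : K) - ((θ m u : Kˣ) : K)) * ((θ i t : Kˣ) : K)) m]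
          at hfull
        simp only [sub_self, mul_zero, zero_mul, zero_add] at hfull
        simpa [hc'def, hθ'def, mul_assoc] using hfull
      have hIH := ih S' θ' hθ' c' hc' hvanish'
      -- cardinality bookkeeping
      have himg : (S.image (· * u⁻¹)).card = S.card :=
        Finset.card_image_of_injective _ (fun a b h => by
          simpa using mul_right_cancel h)
      have hunion : (S ∪ S.image (· * u⁻¹)).card ≤ Fintype.card T :=
        Finset.card_le_univ _
      have hcard : 2 * S.card ≤ Fintype.card T + S'.card := by
        have h5 := Finset.card_union_add_card_inter S (S.image (· * u⁻¹))
        rw [← hS'def] at h5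
        omega
      set a := 2 ^ (k - 1) with ha
      have h2k : 2 ^ k = 2 * a := by
        rw [ha, ← pow_succ']
        congr 1
        omega
      have ha1 : 1 ≤ a := Nat.one_le_two_pow
      simp only [Nat.add_sub_cancel]
      calc 2 ^ k * S.card = a * (2 * S.card) := by rw [h2k]; ring
        _ ≤ a * (Fintype.card T + S'.card) := Nat.mul_le_mul_left _ hcard
        _ = a * Fintype.card T + a * S'.card := by ring
        _ ≤ a * Fintype.card T + (a - 1) * Fintype.card T := by
            exact Nat.add_le_add_left hIH _
        _ = (a + (a - 1)) * Fintype.card T := (Nat.add_mul _ _ _).symm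
        _ = (2 ^ k - 1) * Fintype.card T := by
            congr 1
            omega
end

section
/- Let T be a finite abelian group and K a field of characteristic zero. Any nonzero K-linear combination of finitely many distinct characters of T, viewed as a function T → K, is nonzero at some element of T; moreover if the combination involves k ≥ 1 characters with all coefficients nonzero, it is nonzero on at least 2^{1−k}·|T| elements of T. -/
open Finset
open scoped Classical

/-!
The difference operator `f ↦ f (· * s) - θ i₁ s * f` sends `f = ∑ c i θ i` to
`∑ c i (θ i s - θ i₁ s) θ i`: the terms with `θ i s = θ i₁ s`, among them `θ i₁`, disappear, and
choosing `s` with `θ i₀ s ≠ θ i₁ s` keeps `θ i₀`. The support of the new combination lies in the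
union of the supports of `f` and of its translate by `s⁻¹`, so it is at most twice as large, and
induction on the number of characters gives `|G| ≤ 2 ^ (k - 1) · |supp f|`; in particular `f ≠ 0`.
-/

section Support

variable {G R : Type*} [Group G] [Fintype G]

theorem card_filter_mul_right (p : G → Prop) [DecidablePred p] (s : G) :
    #{g | p (g * s)} = #{g | p g} :=
  card_equiv (Equiv.mulRight s) (by simp)

theorem card_support_mul_right_sub_le [Ring R] (f : G → R) (a : R) (s : G) :
    #{g | f (g * s) - a * f g ≠ 0} ≤ 2 * #{g | f g ≠ 0} :=
  calc #{g | f (g * s) - a * f g ≠ 0}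
      ≤ #{g | f (g * s) ≠ 0 ∨ f g ≠ 0} := card_le_card <| monotone_filter_right _ fun g _ h => by
        contrapose! h
        simp [h]
    _ ≤ #{g | f (g * s) ≠ 0} + #{g | f g ≠ 0} := by rw [filter_or]; exact card_union_le _ _
    _ = 2 * #{g | f g ≠ 0} := by rw [card_filter_mul_right (fun g => f g ≠ 0), two_mul]

end Support

section Characters

variable {ι M G K : Type*} [CommRing K]

theorem sum_character_mul_right_sub [Monoid M] (θ : ι → M →* Kˣ) (c : ι → K) (S : Finset ι)
    (i₁ : ι) (s g : M) :
    ∑ i ∈ S, c i * (θ i (g * s) : K) - θ i₁ s * ∑ i ∈ S, c i * (θ i g : K) =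
      ∑ i ∈ S with θ i s ≠ θ i₁ s, c i * (θ i s - θ i₁ s) * θ i g := by
  rw [sum_filter_of_ne fun i _ h hi => by simp [hi] at h, mul_sum, ← sum_sub_distrib]
  refine sum_congr rfl fun i _ => ?_
  rw [map_mul, Units.val_mul]
  ring

variable [IsDomain K] [Group G] [Fintype G]

theorem card_le_two_pow_mul_card_support (θ : ι → G →* Kˣ) (S : Finset ι) (hθ : Set.InjOn θ S)
    (hS : S.Nonempty) (c : ι → K) (hc : ∀ i ∈ S, c i ≠ 0) :
    Fintype.card G ≤ 2 ^ (#S - 1) * #{g | ∑ i ∈ S, c i * (θ i g : K) ≠ 0} := by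
  induction S using Finset.strongInduction generalizing c with
  | H S ih =>
  obtain ⟨i₁, hi₁⟩ := hS
  by_cases hsingle : ∀ i ∈ S, i = i₁
  · obtain rfl : S = {i₁} := eq_singleton_iff_unique_mem.mpr ⟨hi₁, hsingle⟩
    have hsupport : ∀ g, c i₁ * (θ i₁ g : K) ≠ 0 := fun g =>
      mul_ne_zero (hc i₁ (mem_singleton_self i₁)) (θ i₁ g).ne_zero
    simp [hsupport]
  push Not at hsingle
  obtain ⟨i₀, hi₀, hne⟩ := hsingle
  obtain ⟨s, hs⟩ : ∃ s, θ i₀ s ≠ θ i₁ s := by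
    by_contra! h
    exact hne (hθ hi₀ hi₁ (MonoidHom.ext h))
  set S' := {i ∈ S | θ i s ≠ θ i₁ s}
  have hi₀' : i₀ ∈ S' := mem_filter.mpr ⟨hi₀, hs⟩
  have hS'S : S' ⊂ S := ssubset_of_subset_of_ne (filter_subset _ _) fun h =>
    (mem_filter.mp (h ▸ hi₁ : i₁ ∈ S')).2 rfl
  have hS'card : #S' ≤ #S - 1 := by
    have := card_lt_card hS'S
    omega
  have hcoeff : ∀ i ∈ S', c i * (θ i s - θ i₁ s) ≠ 0 := fun i hi =>
    have ⟨hiS, his⟩ := mem_filter.mp hi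
    mul_ne_zero (hc i hiS) (sub_ne_zero.mpr (Units.val_injective.ne his))
  have hdiff := card_support_mul_right_sub_le (fun g => ∑ i ∈ S, c i * (θ i g : K)) (θ i₁ s) s
  simp only [sum_character_mul_right_sub] at hdiff
  calc Fintype.card G
      ≤ 2 ^ (#S' - 1) * #{g | ∑ i ∈ S', c i * (θ i s - θ i₁ s) * θ i g ≠ 0} :=
        ih S' hS'S (hθ.mono (filter_subset _ _)) ⟨i₀, hi₀'⟩ _ hcoeff
    _ ≤ 2 ^ (#S' - 1) * (2 * #{g | ∑ i ∈ S, c i * (θ i g : K) ≠ 0}) := by gcongr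
    _ ≤ 2 ^ (#S - 1) * #{g | ∑ i ∈ S, c i * (θ i g : K) ≠ 0} := by
        rw [← mul_assoc, ← pow_succ]
        gcongr
        · norm_num
        · have := card_pos.mpr ⟨i₀, hi₀'⟩
          omega

end Characters

theorem support_of_character_combination_large_general
    {T K : Type*} [CommGroup T] [Fintype T]
    [Field K]
    (k : ℕ) (hk : 1 ≤ k)
    (θ : Fin k → (T →* Kˣ)) (hθ : Function.Injective θ)
    (c : Fin k → K) (hc : ∀ i, c i ≠ 0) :
    (∃ t : T, ∑ i, c i * ((θ i t : Kˣ) : K) ≠ 0) ∧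
    Fintype.card T ≤
      2 ^ (k - 1) *
        (Finset.univ.filter fun t : T =>
          ∑ i, c i * ((θ i t : Kˣ) : K) ≠ 0).card := by
  have hbound := card_le_two_pow_mul_card_support θ univ hθ.injOn
    (univ_nonempty_iff.mpr ⟨⟨0, hk⟩⟩) c fun i _ => hc i
  rw [card_univ, Fintype.card_fin] at hbound
  refine ⟨?_, hbound⟩
  obtain ⟨t, ht⟩ := card_pos.mp (Nat.pos_of_mul_pos_left (hbound.trans_lt' Fintype.card_pos))
  exact ⟨t, (mem_filter.mp ht).2⟩

/-- Lusztig's refinement of Dedekind's theorem: a nonzero linear combination of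
`k ≥ 1` distinct characters, with all coefficients nonzero, is nonzero
somewhere, and in fact on at least `2^{1-k} * |T|` elements of `T`. -/
theorem support_of_character_combination_large
    {T K : Type*} [CommGroup T] [Fintype T] [DecidableEq T]
    [Field K] [CharZero K]
    (k : ℕ) (hk : 1 ≤ k)
    (θ : Fin k → (T →* Kˣ)) (hθ : Function.Injective θ)
    (c : Fin k → K) (hc : ∀ i, c i ≠ 0) :
    (∃ t : T, ∑ i, c i * ((θ i t : Kˣ) : K) ≠ 0) ∧
    Fintype.card T ≤
      2 ^ (k - 1) *
        (Finset.univ.filter fun t : T =>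
          ∑ i, c i * ((θ i t : Kˣ) : K) ≠ 0).card :=
  support_of_character_combination_large_general k hk θ hθ c hc
end
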